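/- arXiv:2503.00002 — 2 statements merged into one kernel-verified Lean document; each statement's English description precedes it below -/
import Mathlib

section
/- The function M ↦ log(cᵀM⁻¹c) is convex on the cone of symmetric positive definite matrices, for any fixed nonzero c ∈ ℝ^p. -/
open Matrix

lemma myPosDef_smul {p : ℕ} {M : Matrix (Fin p) (Fin p) ℝ} (hM : M.PosDef) {a : ℝ}
    (ha : 0 < a) : (a • M).PosDef := by
  refine PosDef.of_dotProduct_mulVec_pos ?_ fun x hx => ?_
  · unfold Matrix.IsHermitian
    rw [conjTranspose_smul, hM.1]
    simp
  · rw [smul_mulVec, dotProduct_smul, smul_eq_mul]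
    exact mul_pos ha (hM.dotProduct_mulVec_pos hx)

lemma mySymm {p : ℕ} {A : Matrix (Fin p) (Fin p) ℝ} (hA : A.IsHermitian) (u v : Fin p → ℝ) :
    v ⬝ᵥ (A *ᵥ u) = u ⬝ᵥ (A *ᵥ v) := by
  have h : v ᵥ* A = A *ᵥ v := by
    rw [← mulVec_transpose, ← conjTranspose_eq_transpose_of_trivial, hA.eq]
  rw [dotProduct_mulVec, h, dotProduct_comm]

lemma myCS {p : ℕ} {A : Matrix (Fin p) (Fin p) ℝ} (hA : A.PosDef) (u v : Fin p → ℝ) :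
    (u ⬝ᵥ (A *ᵥ v))^2 ≤ (u ⬝ᵥ (A *ᵥ u)) * (v ⬝ᵥ (A *ᵥ v)) := by
  have key : ∀ t : ℝ, 0 ≤ (v ⬝ᵥ (A *ᵥ v)) * (t * t) + (2 * (u ⬝ᵥ (A *ᵥ v))) * t
      + (u ⬝ᵥ (A *ᵥ u)) := by
    intro t
    have h := hA.posSemidef.dotProduct_mulVec_nonneg (u + t • v)
    simp only [star_trivial, mulVec_add, mulVec_smul, dotProduct_add, add_dotProduct,
      dotProduct_smul, smul_dotProduct, smul_eq_mul] at h
    rw [mySymm hA.1 u v] at h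
    nlinarith [h]
  have hd := discrim_le_zero key
  unfold discrim at hd
  nlinarith [hd]

lemma myCombo {p : ℕ} {A B : Matrix (Fin p) (Fin p) ℝ} (hA : A.PosDef) (hB : B.PosDef)
    {a b : ℝ} (ha : 0 < a) (hb : 0 < b) : (a • A + b • B).PosDef :=
  (myPosDef_smul hA ha).add (myPosDef_smul hB hb)


/-- `M ↦ log(cᵀM⁻¹c)` is convex on the cone of symmetric positive definite matrices,
for any fixed nonzero `c`. -/
theorem log_quadform_inv_convexOn (p : ℕ) (c : Fin p → ℝ) (hc : c ≠ 0) :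
    ConvexOn ℝ {M : Matrix (Fin p) (Fin p) ℝ | M.PosDef}
      (fun M => Real.log (c ⬝ᵥ (M⁻¹ *ᵥ c))) := by
  constructor
  · intro A hA B hB a b ha hb hab
    rcases eq_or_lt_of_le ha with rfl | ha'
    · simp only [zero_add] at hab; subst hab; simpa using hB
    rcases eq_or_lt_of_le hb with rfl | hb'
    · simp only [add_zero] at hab; subst hab; simpa using hA
    exact myCombo hA hB ha' hb'
  · intro A hA B hB a b ha hb hab
    rcases eq_or_lt_of_le ha with rfl | ha'
    · simp only [zero_add] at hab; subst hab; simp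
    rcases eq_or_lt_of_le hb with rfl | hb'
    · simp only [add_zero] at hab; subst hab; simp
    simp only [Set.mem_setOf_eq] at hA hB
    set M := a • A + b • B with hMdef
    have hM : M.PosDef := myCombo hA hB ha' hb'
    have hMinv : M⁻¹.PosDef := hM.inv
    set x := M⁻¹ *ᵥ c with hxdef
    have hcx : 0 < c ⬝ᵥ x := by simpa using hMinv.dotProduct_mulVec_pos hc
    have hx0 : x ≠ 0 := by rintro h; rw [h, dotProduct_zero] at hcx; exact lt_irrefl 0 hcx
    have hMx : M *ᵥ x = c := by
      rw [hxdef, mulVec_mulVec, Matrix.mul_nonsing_inv _ hM.det_pos.ne'.isUnit, one_mulVec]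
    have hxMx : x ⬝ᵥ (M *ᵥ x) = c ⬝ᵥ x := by rw [hMx, dotProduct_comm]
    have hexp : x ⬝ᵥ (M *ᵥ x) = a * (x ⬝ᵥ (A *ᵥ x)) + b * (x ⬝ᵥ (B *ᵥ x)) := by
      simp [hMdef, add_mulVec, smul_mulVec, dotProduct_add, dotProduct_smul]
    have hxAx : 0 < x ⬝ᵥ (A *ᵥ x) := by simpa using hA.dotProduct_mulVec_pos hx0
    have hxBx : 0 < x ⬝ᵥ (B *ᵥ x) := by simpa using hB.dotProduct_mulVec_pos hx0
    have hfA : 0 < c ⬝ᵥ (A⁻¹ *ᵥ c) := by simpa using hA.inv.dotProduct_mulVec_pos hc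
    have hfB : 0 < c ⬝ᵥ (B⁻¹ *ᵥ c) := by simpa using hB.inv.dotProduct_mulVec_pos hc
    -- Cauchy–Schwarz for A and B
    have csA : (c ⬝ᵥ x)^2 ≤ (x ⬝ᵥ (A *ᵥ x)) * (c ⬝ᵥ (A⁻¹ *ᵥ c)) := by
      have h := myCS hA x (A⁻¹ *ᵥ c)
      rw [mulVec_mulVec, Matrix.mul_nonsing_inv _ hA.det_pos.ne'.isUnit, one_mulVec] at h
      calc (c ⬝ᵥ x)^2 = (x ⬝ᵥ c)^2 := by rw [dotProduct_comm]
        _ ≤ (x ⬝ᵥ (A *ᵥ x)) * ((A⁻¹ *ᵥ c) ⬝ᵥ c) := h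
        _ = (x ⬝ᵥ (A *ᵥ x)) * (c ⬝ᵥ (A⁻¹ *ᵥ c)) := by rw [dotProduct_comm (A⁻¹ *ᵥ c) c]
    have csB : (c ⬝ᵥ x)^2 ≤ (x ⬝ᵥ (B *ᵥ x)) * (c ⬝ᵥ (B⁻¹ *ᵥ c)) := by
      have h := myCS hB x (B⁻¹ *ᵥ c)
      rw [mulVec_mulVec, Matrix.mul_nonsing_inv _ hB.det_pos.ne'.isUnit, one_mulVec] at h
      calc (c ⬝ᵥ x)^2 = (x ⬝ᵥ c)^2 := by rw [dotProduct_comm]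
        _ ≤ (x ⬝ᵥ (B *ᵥ x)) * ((B⁻¹ *ᵥ c) ⬝ᵥ c) := h
        _ = (x ⬝ᵥ (B *ᵥ x)) * (c ⬝ᵥ (B⁻¹ *ᵥ c)) := by rw [dotProduct_comm (B⁻¹ *ᵥ c) c]
    -- log inequalities
    have keyA : 2 * Real.log (c ⬝ᵥ x) ≤ Real.log (x ⬝ᵥ (A *ᵥ x)) + Real.log (c ⬝ᵥ (A⁻¹ *ᵥ c)) := by
      have := Real.log_le_log (by positivity) csA
      rwa [Real.log_pow, Real.log_mul hxAx.ne' hfA.ne', Nat.cast_ofNat] at this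
    have keyB : 2 * Real.log (c ⬝ᵥ x) ≤ Real.log (x ⬝ᵥ (B *ᵥ x)) + Real.log (c ⬝ᵥ (B⁻¹ *ᵥ c)) := by
      have := Real.log_le_log (by positivity) csB
      rwa [Real.log_pow, Real.log_mul hxBx.ne' hfB.ne', Nat.cast_ofNat] at this
    -- concavity of log
    have hconc : a * Real.log (x ⬝ᵥ (A *ᵥ x)) + b * Real.log (x ⬝ᵥ (B *ᵥ x))
        ≤ Real.log (c ⬝ᵥ x) := by
      have h := strictConcaveOn_log_Ioi.concaveOn.2 (Set.mem_Ioi.mpr hxAx)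
        (Set.mem_Ioi.mpr hxBx) ha hb hab
      simp only [smul_eq_mul] at h
      rwa [← hexp, hxMx] at h
    have hgoal : Real.log (c ⬝ᵥ x) ≤ a * Real.log (c ⬝ᵥ (A⁻¹ *ᵥ c))
        + b * Real.log (c ⬝ᵥ (B⁻¹ *ᵥ c)) := by
      have h1 := mul_le_mul_of_nonneg_left keyA ha
      have h2 := mul_le_mul_of_nonneg_left keyB hb
      rw [mul_add] at h1 h2
      have hsum : a * (2 * Real.log (c ⬝ᵥ x)) + b * (2 * Real.log (c ⬝ᵥ x))
          = 2 * Real.log (c ⬝ᵥ x) := by rw [← add_mul, hab, one_mul]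
      linarith [h1, h2, hconc, hsum]
    calc Real.log (c ⬝ᵥ (M⁻¹ *ᵥ c)) = Real.log (c ⬝ᵥ x) := rfl
      _ ≤ a * Real.log (c ⬝ᵥ (A⁻¹ *ᵥ c)) + b * Real.log (c ⬝ᵥ (B⁻¹ *ᵥ c)) := hgoal
      _ = a • Real.log (c ⬝ᵥ (A⁻¹ *ᵥ c)) + b • Real.log (c ⬝ᵥ (B⁻¹ *ᵥ c)) := by simp
end

section
/- In the proportional odds model, the RD50 equation π₂(x) = 1/2 (with π₂(x) = σ(β₂+αx) − σ(β₁+αx), σ the logistic function, α < 0, β₁ < β₂) has a solution if and only if tanh((β₂−β₁)/4) ≥ 1/2, i.e. β₂ − β₁ ≥ 4·artanh(1/2) = 2·log 3. -/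
/-- In the proportional odds model with logistic cdf `σ`, slope `α < 0` and
`β₁ < β₂`, the RD50 equation `σ(β₂+αx) − σ(β₁+αx) = 1/2` has a solution iff
`β₂ − β₁ ≥ 2·log 3` (equivalently `tanh((β₂−β₁)/4) ≥ 1/2`). -/
theorem rd50_existence_iff (a b1 b2 : ℝ) (ha : a < 0) (hb : b1 < b2) :
    (∃ x : ℝ, 1 / (1 + Real.exp (-(b2 + a * x))) -
        1 / (1 + Real.exp (-(b1 + a * x))) = 1 / 2) ↔
      2 * Real.log 3 ≤ b2 - b1 := by
  have hlog9 : 2 * Real.log 3 = Real.log 9 := by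
    rw [show (9:ℝ) = 3 ^ 2 by norm_num, Real.log_pow]
    push_cast; ring
  constructor
  · rintro ⟨x, hx⟩
    set q := Real.exp (-(b2 + a * x)) with hqdef
    set p := Real.exp (-(b1 + a * x)) with hpdef
    have hq : 0 < q := Real.exp_pos _
    have hp : 0 < p := Real.exp_pos _
    set E := Real.exp (b2 - b1) with hEdef
    have hE : 0 < E := Real.exp_pos _
    have hpE : p = q * E := by
      rw [hpdef, hqdef, hEdef, ← Real.exp_add]; ring_nf
    have h1q : (0:ℝ) < 1 + q := by linarith
    have h1p : (0:ℝ) < 1 + p := by linarith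
    rw [div_sub_div _ _ (ne_of_gt h1q) (ne_of_gt h1p), div_eq_div_iff (by positivity) (by norm_num)] at hx
    have heq : q^2 * E + 3 * q + 1 = q * E := by nlinarith [hx, hpE]
    set s := Real.sqrt E with hsdef
    have hs : 0 ≤ s := Real.sqrt_nonneg _
    have hs2 : s ^ 2 = E := Real.sq_sqrt hE.le
    have hE9 : 9 ≤ E := by
      have key : E - 3 ≥ 2 * s := by
        have h1 : q * E - 3 * q ≥ 2 * q * s := by nlinarith [sq_nonneg (q * s - 1)]
        have := (mul_le_mul_iff_right₀ hq).mp (by nlinarith : q * (2 * s) ≤ q * (E - 3))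
        linarith
      nlinarith [sq_nonneg (s - 3)]
    rw [hlog9]
    have := Real.log_le_log (by norm_num : (0:ℝ) < 9) hE9
    simpa [hEdef, Real.log_exp] using this
  · intro hd
    have hE : 9 ≤ Real.exp (b2 - b1) := by
      have : Real.exp (2 * Real.log 3) ≤ Real.exp (b2 - b1) := Real.exp_le_exp.mpr hd
      rwa [hlog9, Real.exp_log (by norm_num)] at this
    set g : ℝ → ℝ := fun t => 1 / (1 + Real.exp (-(b2 + t))) - 1 / (1 + Real.exp (-(b1 + t))) with hgdef
    have hg : Continuous g := by
      apply Continuous.sub <;>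
        exact continuous_const.div (by continuity) (fun t => by positivity)
    -- half of the gap
    have hR : 3 ≤ Real.exp ((b2 - b1) / 2) := by
      have h2 : Real.exp ((b2 - b1) / 2) ^ 2 = Real.exp (b2 - b1) := by
        rw [sq, ← Real.exp_add]; ring_nf
      nlinarith [Real.exp_pos ((b2 - b1) / 2)]
    have hlow : g (-b2) ≤ 1 / 2 := by
      simp only [hgdef]
      have h0 : -(b2 + -b2) = 0 := by ring
      rw [h0, Real.exp_zero]
      have : (0:ℝ) < 1 / (1 + Real.exp (-(b1 + -b2))) := by positivity
      norm_num
      positivity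
    have hhigh : 1 / 2 ≤ g (-(b1 + b2) / 2) := by
      simp only [hgdef]
      have e1 : -(b2 + -(b1 + b2) / 2) = -((b2 - b1) / 2) := by ring
      have e2 : -(b1 + -(b1 + b2) / 2) = (b2 - b1) / 2 := by ring
      rw [e1, e2]
      set R := Real.exp ((b2 - b1) / 2) with hRdef
      have hRpos : 0 < R := Real.exp_pos _
      have hr : Real.exp (-((b2 - b1) / 2)) = 1 / R := by
        rw [Real.exp_neg]; exact (inv_eq_one_div R)
      rw [hr]
      have h1 : (0:ℝ) < 1 + 1 / R := by positivity
      have h2 : (0:ℝ) < 1 + R := by positivity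
      rw [div_sub_div _ _ (ne_of_gt h1) (ne_of_gt h2), le_div_iff₀ (by positivity)]
      have hrR : (1 / R) * R = 1 := by field_simp
      have hr3 : 1 / R ≤ 1 / 3 := by
        rw [div_le_div_iff₀ (by positivity) (by norm_num)]; linarith
      nlinarith [hrR, hr3, hR]
    have hle : -b2 ≤ -(b1 + b2) / 2 := by linarith
    have := intermediate_value_Icc hle hg.continuousOn
    have hmem : (1:ℝ)/2 ∈ Set.Icc (g (-b2)) (g (-(b1 + b2) / 2)) := ⟨hlow, hhigh⟩
    obtain ⟨t, _, ht⟩ := this hmem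
    refine ⟨t / a, ?_⟩
    have hat : a * (t / a) = t := by rw [mul_div_assoc']; exact mul_div_cancel_left₀ t (ne_of_lt ha)
    rw [hat]
    exact ht
end
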